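/- arXiv:1006.5223 — 2 statements merged into one kernel-verified Lean document; each statement's English description precedes it below -/
import Mathlib

section
/- Let g, h ∈ SL(2,ℝ). The pair (g,h) is reducible — that is, there exists a nonzero vector v ∈ ℂ² which is a common eigenvector of g and h regarded as complex matrices — if and only if Tr(g·h·g⁻¹·h⁻¹) = 2. -/
/-!
Since `g⁻¹ = adj g` in SL(2), the identity `tr (A B adj A adj B) = 2 det A det B - det (AB - BA)`
for 2×2 matrices turns the condition `Tr [g, h] = 2` into `det (gh - hg) = 0`.

A common eigenvector of `A` and `B` lies in the kernel of `AB - BA`, so that determinant vanishes.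
Conversely, Cayley–Hamilton gives `[A, B] A + A [A, B] = tr A • [A, B]`, so `ker [A, B]` is
invariant under `A` and (symmetrically) `B`. If `det [A, B] = 0` this kernel is a nonzero
subspace on which `A` and `B` commute, and commuting operators over `ℂ` have a common eigenvector.
-/

/-- The trace of an element of SL(2,ℝ), viewed as a 2×2 real matrix. -/
def trSL (g : Matrix.SpecialLinearGroup (Fin 2) ℝ) : ℝ :=
  Matrix.trace (g : Matrix (Fin 2) (Fin 2) ℝ)

theorem Module.End.exists_common_eigenvector_of_commute {K V : Type*} [Field K] [IsAlgClosed K]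
    [AddCommGroup V] [Module K V] [FiniteDimensional K V] [Nontrivial V] {f g : End K V}
    (hfg : Commute f g) :
    ∃ v ≠ 0, ∃ μ ν : K, f v = μ • v ∧ g v = ν • v := by
  obtain ⟨μ, hμ⟩ := f.exists_eigenvalue
  have hg : ∀ x ∈ f.eigenspace μ, g x ∈ f.eigenspace μ :=
    mapsTo_genEigenspace_of_comm hfg μ 1
  have : Nontrivial (f.eigenspace μ) := Submodule.nontrivial_iff_ne_bot.mpr hμ
  obtain ⟨ν, hν⟩ := exists_eigenvalue (g.restrict hg)
  obtain ⟨w, hw⟩ := hν.exists_hasEigenvector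
  exact ⟨w, by simpa using hw.2, μ, ν, mem_eigenspace_iff.mp w.2,
    congrArg Subtype.val hw.apply_eq_smul⟩

namespace Matrix

section CommRing

variable {R : Type*} [CommRing R]

theorem commutator_mul_add_mul_commutator_fin_two (A B : Matrix (Fin 2) (Fin 2) R) :
    (A * B - B * A) * A + A * (A * B - B * A) = A.trace • (A * B - B * A) := by
  ext i j
  fin_cases i <;> fin_cases j <;>
    simp [mul_apply, Fin.sum_univ_two, trace_fin_two] <;> ring

theorem commutator_mulVec_mulVec_eq_zero_fin_two {A B : Matrix (Fin 2) (Fin 2) R}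
    {x : Fin 2 → R} (hx : (A * B - B * A) *ᵥ x = 0) :
    (A * B - B * A) *ᵥ (A *ᵥ x) = 0 := by
  calc (A * B - B * A) *ᵥ (A *ᵥ x)
      = (A.trace • (A * B - B * A) - A * (A * B - B * A)) *ᵥ x := by
        rw [mulVec_mulVec, ← commutator_mul_add_mul_commutator_fin_two, add_sub_cancel_right]
    _ = 0 := by rw [sub_mulVec, smul_mulVec, ← mulVec_mulVec, hx, mulVec_zero, smul_zero, sub_zero]

theorem trace_mul_mul_adjugate_mul_adjugate_fin_two (A B : Matrix (Fin 2) (Fin 2) R) :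
    trace (A * B * adjugate A * adjugate B) = 2 * A.det * B.det - (A * B - B * A).det := by
  simp [trace_fin_two, adjugate_fin_two, det_fin_two, mul_apply, Fin.sum_univ_two]
  ring

end CommRing

theorem det_commutator_eq_zero_of_common_eigenvector {n R : Type*} [Fintype n] [DecidableEq n]
    [CommRing R] [IsDomain R] {A B : Matrix n n R} {v : n → R} (hv : v ≠ 0) {μ ν : R}
    (hA : A *ᵥ v = μ • v) (hB : B *ᵥ v = ν • v) : (A * B - B * A).det = 0 :=
  exists_mulVec_eq_zero_iff.mp ⟨v, hv, by
    simp [sub_mulVec, ← mulVec_mulVec, hA, hB, mulVec_smul, smul_smul, mul_comm]⟩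

theorem exists_common_eigenvector_of_det_commutator_eq_zero_fin_two {K : Type*} [Field K]
    [IsAlgClosed K] {A B : Matrix (Fin 2) (Fin 2) K} (h : (A * B - B * A).det = 0) :
    ∃ v ≠ 0, ∃ μ ν : K, A *ᵥ v = μ • v ∧ B *ᵥ v = ν • v := by
  let W := LinearMap.ker (toLin' (A * B - B * A))
  have mem_W {x : Fin 2 → K} : x ∈ W ↔ (A * B - B * A) *ᵥ x = 0 := by
    rw [LinearMap.mem_ker, toLin'_apply]
  have hAW : ∀ x ∈ W, toLin' A x ∈ W := fun x hx => by
    rw [mem_W, toLin'_apply]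
    exact commutator_mulVec_mulVec_eq_zero_fin_two (mem_W.mp hx)
  have hBW : ∀ x ∈ W, toLin' B x ∈ W := fun x hx => by
    have hx' : (B * A - A * B) *ᵥ x = 0 := by rw [← neg_sub, neg_mulVec, mem_W.mp hx, neg_zero]
    rw [mem_W, toLin'_apply, ← neg_sub, neg_mulVec, commutator_mulVec_mulVec_eq_zero_fin_two hx',
      neg_zero]
  obtain ⟨v, hv0, hv⟩ := exists_mulVec_eq_zero_iff.mpr h
  have : Nontrivial W := nontrivial_of_ne ⟨v, mem_W.mpr hv⟩ 0 (by simpa using hv0)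
  have hcomm : Commute ((toLin' A).restrict hAW) ((toLin' B).restrict hBW) := by
    refine LinearMap.ext fun x => Subtype.ext ?_
    have := mem_W.mp x.2
    rw [sub_mulVec, sub_eq_zero, ← mulVec_mulVec, ← mulVec_mulVec] at this
    simpa using this
  obtain ⟨w, hw0, μ, ν, hA, hB⟩ := Module.End.exists_common_eigenvector_of_commute hcomm
  exact ⟨w, by simpa using hw0, μ, ν, by simpa using congrArg Subtype.val hA,
    by simpa using congrArg Subtype.val hB⟩

theorem exists_common_eigenvector_iff_det_commutator_eq_zero_fin_two {K : Type*} [Field K]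
    [IsAlgClosed K] {A B : Matrix (Fin 2) (Fin 2) K} :
    (∃ v ≠ 0, ∃ μ ν : K, A *ᵥ v = μ • v ∧ B *ᵥ v = ν • v) ↔ (A * B - B * A).det = 0 :=
  ⟨fun ⟨_, hv, _, _, hA, hB⟩ => det_commutator_eq_zero_of_common_eigenvector hv hA hB,
    exists_common_eigenvector_of_det_commutator_eq_zero_fin_two⟩

end Matrix

theorem trSL_commutator (g h : Matrix.SpecialLinearGroup (Fin 2) ℝ) :
    trSL (g * h * g⁻¹ * h⁻¹) = 2 - ((g : Matrix (Fin 2) (Fin 2) ℝ) * h - h * g).det := by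
  simp [trSL, Matrix.SpecialLinearGroup.coe_inv, Matrix.trace_mul_mul_adjugate_mul_adjugate_fin_two]

/-- The pair `(g,h)` of elements of SL(2,ℝ) is reducible — `g` and `h`, viewed as
complex matrices, have a common eigenvector `v ≠ 0` in `ℂ²` — if and only if
`Tr[g,h] = 2`. -/
theorem stmt4 (g h : Matrix.SpecialLinearGroup (Fin 2) ℝ) :
    (∃ v : Fin 2 → ℂ, v ≠ 0 ∧ ∃ μ ν : ℂ,
        ((g : Matrix (Fin 2) (Fin 2) ℝ).map (Complex.ofReal)).mulVec v = μ • v ∧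
        ((h : Matrix (Fin 2) (Fin 2) ℝ).map (Complex.ofReal)).mulVec v = ν • v) ↔
      trSL (g * h * g⁻¹ * h⁻¹) = 2 := by
  have hdet (A B : Matrix (Fin 2) (Fin 2) ℝ) :
      (A.map Complex.ofReal * B.map Complex.ofReal - B.map Complex.ofReal * A.map Complex.ofReal).det
        = ((A * B - B * A).det : ℂ) := by
    rw [← Complex.ofRealHom_eq_coe, RingHom.map_det, map_sub, map_mul, map_mul]
    rfl
  rw [Matrix.exists_common_eigenvector_iff_det_commutator_eq_zero_fin_two, hdet, trSL_commutator,
    sub_eq_self, Complex.ofReal_eq_zero]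
end

section
/- Let F₂ be the free group on two generators a, b, let ρ : F₂ → SL(2,ℝ) be a homomorphism, and let φ be an automorphism of F₂. Then Tr( ρ(φ(a))·ρ(φ(b))·ρ(φ(a))⁻¹·ρ(φ(b))⁻¹ ) = Tr( ρ(a)·ρ(b)·ρ(a)⁻¹·ρ(b)⁻¹ ). (The trace of the commutator, equivalently the value κ(x,y,z) = x² + y² + z² − xyz − 2 of the character, is invariant under every change of free basis.) -/
/-!
The trace of `SL(2,ℝ)` is invariant under conjugation and inversion, so it suffices to show that
for every generating pair `(x, y)` of `F₂ = ⟨a, b⟩` the commutator `⁅x, y⁆` is conjugate to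
`⁅a, b⁆` or to its inverse. The commutator changes only up to conjugation and inversion under the
Nielsen moves: permuting and inverting `x, y`, replacing `(u, v)` by `(u, u v)`, and conjugating
both entries. We argue by induction on `|x| + |y|`. If no move shortens the pair, it is
Nielsen-reduced: in a product `p q r` of letters `x^±1, y^±1` some letter of `q` survives the
cancellations on both sides. Then the image of a reduced word `w` in `x, y` has length at least
`|w|`, so the generators `a, b`, of length one, are themselves among `x^±1, y^±1`.
-/

open scoped commutatorElement

section Conjugacy

variable {G H : Type*} [Group G] [Group H]

theorem IsConj.inv {a b : G} (h : IsConj a b) : IsConj a⁻¹ b⁻¹ := by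
  obtain ⟨c, rfl⟩ := isConj_iff.1 h
  exact isConj_iff.2 ⟨c, conj_inv.symm⟩

def IsConjUpToInv (g h : G) : Prop := IsConj g h ∨ IsConj g h⁻¹

namespace IsConjUpToInv

theorem of_isConj {g h : G} (hc : IsConj g h) : IsConjUpToInv g h := .inl hc

theorem inv_left (g : G) : IsConjUpToInv g⁻¹ g := .inr (IsConj.refl _)

theorem symm {g h : G} : IsConjUpToInv g h → IsConjUpToInv h g
  | .inl hc => .inl hc.symm
  | .inr hc => .inr (by simpa using hc.inv.symm)

theorem trans {g h k : G} : IsConjUpToInv g h → IsConjUpToInv h k → IsConjUpToInv g k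
  | .inl h₁, .inl h₂ => .inl (h₁.trans h₂)
  | .inl h₁, .inr h₂ => .inr (h₁.trans h₂)
  | .inr h₁, .inl h₂ => .inr (h₁.trans h₂.inv)
  | .inr h₁, .inr h₂ => .inl (h₁.trans (by simpa using h₂.inv))

theorem map (φ : G →* H) {g h : G} : IsConjUpToInv g h → IsConjUpToInv (φ g) (φ h)
  | .inl hc => .inl (φ.map_isConj hc)
  | .inr hc => .inr (by simpa using φ.map_isConj hc)

end IsConjUpToInv

theorem isConjUpToInv_commutatorElement_swap (x y : G) : IsConjUpToInv ⁅y, x⁆ ⁅x, y⁆ := by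
  rw [← commutatorElement_inv]
  exact .inv_left _

theorem isConjUpToInv_commutatorElement_inv_left (x y : G) : IsConjUpToInv ⁅x⁻¹, y⁆ ⁅x, y⁆ := by
  refine .inr (isConj_iff.2 ⟨x, ?_⟩)
  rw [commutatorElement_inv_left, commutatorElement_inv]
  group

theorem isConj_commutatorElement_mul_right (x y : G) : IsConj ⁅x, x * y⁆ ⁅x, y⁆ :=
  isConj_iff.2 ⟨x⁻¹, by simp only [commutatorElement_def]; group⟩

theorem isConj_commutatorElement_conj (g x y : G) : IsConj ⁅g * x * g⁻¹, g * y * g⁻¹⁆ ⁅x, y⁆ :=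
  isConj_iff.2 ⟨g⁻¹, by rw [← conjugate_commutatorElement]; group⟩

end Conjugacy

namespace Subgroup

variable {G : Type*} [Group G]

theorem closure_pair_inv_left (x y : G) : closure {x⁻¹, y} = closure {x, y} := by
  have key : ∀ x : G, closure {x⁻¹, y} ≤ closure {x, y} := fun x => by
    rw [closure_le, Set.insert_subset_iff, Set.singleton_subset_iff]
    exact ⟨inv_mem (subset_closure (by simp)), subset_closure (by simp)⟩
  exact le_antisymm (key x) (by simpa using key x⁻¹)

theorem closure_pair_mul_right (x y : G) : closure {x, x * y} = closure {x, y} := by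
  apply le_antisymm <;> rw [closure_le, Set.insert_subset_iff, Set.singleton_subset_iff] <;>
    refine ⟨subset_closure (by simp), ?_⟩
  · exact mul_mem (subset_closure (by simp)) (subset_closure (by simp))
  · simpa using mul_mem (inv_mem (subset_closure (by simp : x ∈ {x, x * y})))
      (subset_closure (by simp : x * y ∈ {x, x * y}))

theorem closure_pair_conj (g x y : G) :
    closure {g * x * g⁻¹, g * y * g⁻¹} = (closure {x, y}).map (MulAut.conj g).toMonoidHom := by
  rw [MonoidHom.map_closure, Set.image_pair]
  rfl

end Subgroup

namespace FreeGroup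

open List

variable {β : Type*} [DecidableEq β]

theorem IsReduced.exists_cancel_append {U V : List (β × Bool)} (hU : IsReduced U)
    (hV : IsReduced V) : ∃ A B C, U = A ++ C ∧ V = invRev C ++ B ∧ IsReduced (A ++ B) := by
  induction V generalizing U with
  | nil => exact ⟨U, [], [], by simp, by simp, by simpa using hU⟩
  | cons q V ih =>
    rcases U.eq_nil_or_concat' with rfl | ⟨U, p, rfl⟩
    · exact ⟨[], q :: V, [], by simp, by simp, by simpa using hV⟩
    by_cases hq : q = (p.1, !p.2)
    · obtain ⟨A, B, C, rfl, rfl, hAB⟩ := ih (hU.infix ⟨[], [p], rfl⟩) (hV.infix ⟨[q], [], by simp⟩)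
      exact ⟨A, B, C ++ [p], by simp, by simp [invRev, hq], hAB⟩
    · refine ⟨U ++ [p], q :: V, [], by simp, by simp, isChain_append.2 ⟨hU, hV, ?_⟩⟩
      simp only [getLast?_concat, head?_cons, Option.mem_some_iff, forall_eq']
      intro h
      contrapose! hq
      ext <;> grind

theorem exists_toWord_mul (x y : FreeGroup β) :
    ∃ A B C, x.toWord = A ++ C ∧ y.toWord = invRev C ++ B ∧ (x * y).toWord = A ++ B := by
  obtain ⟨A, B, C, hx, hy, hAB⟩ :=
    (isReduced_toWord (x := x)).exists_cancel_append (isReduced_toWord (x := y))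
  refine ⟨A, B, C, hx, hy, ?_⟩
  have : x * y = mk (A ++ B) := by
    rw [← mk_toWord (x := x), ← mk_toWord (x := y), hx, hy, ← mul_mk, ← mul_mk, ← mul_mk, ← inv_mk,
      mul_assoc, mul_inv_cancel_left, mul_mk]
  rw [this, toWord_mk, hAB.reduce_eq]

theorem norm_lt_norm_mul_self {x : FreeGroup β} (hx : x ≠ 1) : x.norm < (x * x).norm := by
  open reduceCyclically in
  have hsq : (x * x).toWord = conjugator x.toWord ++ (reduceCyclically x.toWord ++
      reduceCyclically x.toWord) ++ invRev (conjugator x.toWord) := by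
    rw [← sq, toWord_pow, reduce_flatten_replicate isReduced_toWord]
    simp
  have hx' := reduceCyclically.conj_conjugator_reduceCyclically x.toWord
  have hcyc : reduceCyclically x.toWord ≠ [] := by
    intro h
    apply hx
    rw [← mk_toWord (x := x), ← hx', h, append_nil, ← mul_mk, ← inv_mk, mul_inv_cancel]
  have := length_pos_iff.2 hcyc
  have h2 := congrArg length hx'
  simp only [norm, hsq, length_append, invRev_length] at h2 ⊢
  omega

theorem eq_one_of_norm_mul_eq_of_norm_inv_mul_eq {u w : FreeGroup β}
    (h₁ : (u * w).norm = w.norm) (h₂ : (u⁻¹ * w).norm = w.norm) : u = 1 := by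
  obtain ⟨A, B, C, hu, hw, huw⟩ := exists_toWord_mul u w
  obtain ⟨A', B', C', hu', hw', huw'⟩ := exists_toWord_mul u⁻¹ w
  have lu : u.norm = A.length + C.length := by simp [norm, hu]
  have lu' : u⁻¹.norm = A'.length + C'.length := by simp [norm, hu']
  have lw : w.norm = C.length + B.length := by simp [norm, hw]
  have lw' : w.norm = C'.length + B'.length := by simp [norm, hw']
  have luw : (u * w).norm = A.length + B.length := by simp [norm, huw]
  have luw' : (u⁻¹ * w).norm = A'.length + B'.length := by simp [norm, huw']
  rw [norm_inv_eq] at lu'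
  have hC : C = C' := invRev_injective (append_inj (hw.symm.trans hw') (by simp; omega)).1
  rw [toWord_inv, hu, invRev_append] at hu'
  have hCA : C = invRev A := hC.trans (append_inj' hu' (by simp; omega)).2.symm
  rw [← mk_toWord (x := u), hu, hCA, ← mul_mk, ← inv_mk, mul_inv_cancel]

/-- The conjugator is the inverse of the half of `u` that cancels against `v`. -/
theorem exists_norm_conj_add_norm_conj_mul_lt {u v : FreeGroup β} (hu : u ≠ 1)
    (hle : u.norm ≤ v.norm) (h₁ : (u * v).norm = v.norm) (h₂ : (v * u).norm = v.norm) :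
    ∃ g, (g * u * g⁻¹).norm + (g * (u * v) * g⁻¹).norm < u.norm + v.norm := by
  obtain ⟨A, B, C, hu', hv, huv⟩ := exists_toWord_mul u v
  obtain ⟨A', B', C', hv', hu'', hvu⟩ := exists_toWord_mul v u
  have lu : u.norm = A.length + C.length := by simp [norm, hu']
  have lu' : u.norm = C'.length + B'.length := by simp [norm, hu'']
  have lv : v.norm = C.length + B.length := by simp [norm, hv]
  have lv' : v.norm = A'.length + C'.length := by simp [norm, hv']
  have luv : (u * v).norm = A.length + B.length := by simp [norm, huv]
  have lvu : (v * u).norm = A'.length + B'.length := by simp [norm, hvu]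
  have hpos : 0 < u.norm := Nat.pos_of_ne_zero (mt norm_eq_zero.1 hu)
  have hA : A = invRev C' := (append_inj (hu'.symm.trans hu'') (by simp; omega)).1
  obtain ⟨W, rfl⟩ : invRev A <:+ B := by
    refine suffix_of_suffix_length_le (l₃ := v.toWord) ?_ ?_ (by simp; omega)
    · rw [hv', hA, invRev_invRev]; exact suffix_append _ _
    · rw [hv]; exact suffix_append _ _
  refine ⟨(mk A)⁻¹, ?_⟩
  have hconj_u : (mk A)⁻¹ * u * (mk A)⁻¹⁻¹ = mk C * mk A := by
    rw [← mk_toWord (x := u), hu', ← mul_mk]; group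
  have hconj_uv : (mk A)⁻¹ * (u * v) * (mk A)⁻¹⁻¹ = mk W := by
    rw [← mk_toWord (x := u * v), huv, ← mul_mk, ← mul_mk, ← inv_mk]; group
  rw [hconj_u, hconj_uv]
  have := norm_mul_le (mk C) (mk A)
  have := norm_mk_le (L₁ := C)
  have := norm_mk_le (L₁ := A)
  have := norm_mk_le (L₁ := W)
  simp only [length_append, invRev_length] at *
  omega

section letterVal

variable {α G : Type*} [Group G]

def letterVal (f : α → G) (p : α × Bool) : G := bif p.2 then f p.1 else (f p.1)⁻¹

variable (f : α → G)

@[simp]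
theorem lift_mk_singleton (p : α × Bool) : lift f (mk [p]) = letterVal f p := by
  simp [lift_mk, letterVal]

theorem letterVal_flip (p : α × Bool) : letterVal f (p.1, !p.2) = (letterVal f p)⁻¹ := by
  rcases p with ⟨i, _ | _⟩ <;> simp [letterVal]

theorem letterVal_eq_or_eq_inv_of_fst_eq {p q : α × Bool} (h : p.1 = q.1) :
    letterVal f q = letterVal f p ∨ letterVal f q = (letterVal f p)⁻¹ := by
  rcases p with ⟨i, _ | _⟩ <;> rcases q with ⟨j, _ | _⟩ <;> simp_all [letterVal]

@[simp]
theorem norm_letterVal (f : α → FreeGroup β) (p : α × Bool) :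
    (letterVal f p).norm = (f p.1).norm := by
  rcases p with ⟨i, _ | _⟩ <;> simp [letterVal, norm_inv_eq]

theorem letterVal_ne_one {f : α → G} (hf : ∀ i, f i ≠ 1) (p : α × Bool) : letterVal f p ≠ 1 := by
  rcases p with ⟨i, _ | _⟩ <;> simp [letterVal, hf]

end letterVal

section NielsenReduced

variable {α : Type*}

theorem norm_le_norm_letterVal_mul {f : α → FreeGroup β} (hf : ∀ i, f i ≠ 1)
    (h : ∀ p q : α × Bool, p.1 ≠ q.1 → (letterVal f q).norm ≤ (letterVal f p * letterVal f q).norm)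
    {p q : α × Bool} (hpq : IsReduced [p, q]) :
    (letterVal f p).norm ≤ (letterVal f p * letterVal f q).norm ∧
      (letterVal f q).norm ≤ (letterVal f p * letterVal f q).norm := by
  by_cases h1 : p.1 = q.1
  · obtain rfl : p = q := Prod.ext h1 ((isReduced_cons_cons.1 hpq).1 h1)
    have := norm_lt_norm_mul_self (letterVal_ne_one hf p)
    omega
  refine ⟨?_, h p q h1⟩
  simpa [letterVal_flip, ← mul_inv_rev, norm_inv_eq] using h (q.1, !q.2) (p.1, !p.2) (Ne.symm h1)

/-- With `c(p, q) = (|p| + |q| - |p q|) / 2` the number of letters cancelled in `p q`, the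
condition says `c(p, q) + c(q, r) < |q|`. -/
def IsNielsenReduced (f : α → FreeGroup β) : Prop :=
  ∀ p q r : α × Bool, IsReduced [p, q, r] →
    (letterVal f p).norm + (letterVal f r).norm <
      (letterVal f p * letterVal f q).norm + (letterVal f q * letterVal f r).norm

variable {f : α → FreeGroup β}

/-- The reduced word of the image of `L ++ [ℓ]` ends with the word of `ℓ` minus its first `d`
letters, and `d` leaves room for the cancellation against any letter that may follow `ℓ`. -/
theorem IsNielsenReduced.exists_toWord_lift_mk (hf : IsNielsenReduced f) (L : List (α × Bool))
    (ℓ : α × Bool) (hL : IsReduced (L ++ [ℓ])) :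
    ∃ P d, (lift f (mk (L ++ [ℓ]))).toWord = P ++ (letterVal f ℓ).toWord.drop d ∧
      L.length ≤ P.length ∧ ∀ u, IsReduced [ℓ, u] → 2 * d + (letterVal f u).norm <
        (letterVal f ℓ).norm + (letterVal f ℓ * letterVal f u).norm := by
  induction L using List.reverseRecOn generalizing ℓ with
  | nil =>
    refine ⟨[], 0, by rw [nil_append, lift_mk_singleton, drop_zero, nil_append], le_rfl,
      fun u hu => ?_⟩
    have := hf ℓ ℓ u (isReduced_cons_cons.2 ⟨fun _ => rfl, hu⟩)
    have := norm_mul_le (letterVal f ℓ) (letterVal f ℓ)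
    omega
  | append_singleton L ℓ' ih =>
    obtain ⟨P, d, hW, hP, hd⟩ := ih ℓ' (hL.infix ⟨[], [ℓ], rfl⟩)
    have hℓ'ℓ : IsReduced [ℓ', ℓ] := hL.infix ⟨L, [], by simp⟩
    obtain ⟨A, B, C, hA, hB, hAB⟩ := exists_toWord_mul (letterVal f ℓ') (letterVal f ℓ)
    have l₁ : (letterVal f ℓ').norm = A.length + C.length := by simp [norm, hA]
    have l₂ : (letterVal f ℓ).norm = C.length + B.length := by simp [norm, hB]
    have l₁₂ : (letterVal f ℓ' * letterVal f ℓ).norm = A.length + B.length := by simp [norm, hAB]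
    have hdA : d < A.length := by have := hd ℓ hℓ'ℓ; omega
    have hAd : A.drop d ≠ [] := by simp; omega
    rw [hA, drop_append_of_le_length hdA.le, ← append_assoc] at hW
    have hred : IsReduced (P ++ A.drop d ++ B) := by
      refine IsReduced.append_overlap ?_ ?_ hAd
      · exact (hW ▸ isReduced_toWord).infix ⟨[], C, rfl⟩
      · exact (hAB ▸ isReduced_toWord).infix
          ⟨A.take d, [], by rw [append_nil, ← append_assoc, take_append_drop]⟩
    have hmul : lift f (mk (L ++ [ℓ'] ++ [ℓ])) = mk (P ++ A.drop d ++ B) := by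
      rw [← mul_mk, _root_.map_mul, lift_mk_singleton, ← mk_toWord (x := lift f _), hW,
        ← mk_toWord (x := letterVal f ℓ), hB, ← mul_mk (L₁ := P ++ A.drop d),
        ← mul_mk (L₁ := invRev C), ← mul_mk (L₁ := P ++ A.drop d), ← inv_mk]
      group
    refine ⟨P ++ A.drop d, C.length, ?_, by simp; omega, fun u hu => ?_⟩
    · rw [hmul, toWord_mk, hred.reduce_eq, hB, drop_left' invRev_length]
    · have := hf ℓ' ℓ u (isReduced_cons_cons.2 ⟨(isReduced_cons_cons.1 hℓ'ℓ).1, hu⟩)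
      omega

theorem IsNielsenReduced.norm_le_norm_lift [DecidableEq α] (hf : IsNielsenReduced f)
    (m : FreeGroup α) : m.norm ≤ (lift f m).norm := by
  rcases m.toWord.eq_nil_or_concat' with h | ⟨L, ℓ, h⟩
  · simp [norm, h]
  obtain ⟨P, d, hW, hP, hd⟩ := hf.exists_toWord_lift_mk L ℓ (h ▸ isReduced_toWord)
  have := hd ℓ (isReduced_cons_cons.2 ⟨fun _ => rfl, .singleton⟩)
  have := norm_mul_le (letterVal f ℓ) (letterVal f ℓ)
  have hm : m = mk (L ++ [ℓ]) := by rw [← h, mk_toWord]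
  have hlift : (lift f m).norm = P.length + ((letterVal f ℓ).norm - d) := by
    rw [hm, norm, hW, length_append, length_drop, norm]
  have : m.norm = L.length + 1 := by simp [norm, h]
  omega

theorem IsNielsenReduced.exists_letterVal_eq [DecidableEq α] (hf : IsNielsenReduced f)
    {z : FreeGroup β} (hz : z ∈ (lift f).range) (h1 : z.norm = 1) : ∃ p, letterVal f p = z := by
  obtain ⟨m, rfl⟩ := hz
  have hm : m.norm ≠ 0 := by
    rintro h
    rw [norm_eq_zero.1 h, _root_.map_one, norm_one] at h1
    omega
  obtain ⟨p, hp⟩ := length_eq_one_iff.1 (show m.toWord.length = 1 by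
    have := hf.norm_le_norm_lift m; simp only [norm] at *; omega)
  exact ⟨p, by rw [← lift_mk_singleton, ← hp, mk_toWord]⟩

end NielsenReduced

section TwoGenerators

variable {G : Type*} [Group G]

theorem letterVal_pair_of_swap_of_inv_left {P : G → G → Prop} (hswap : ∀ x y, P x y → P y x)
    (hinv : ∀ x y, P x y → P x⁻¹ y) {x y : G} (h : P x y) {p q : Fin 2 × Bool} (hpq : p.1 ≠ q.1) :
    P (letterVal ![x, y] p) (letterVal ![x, y] q) := by
  have hinv' : ∀ x y, P x y → P x y⁻¹ := fun x y h => hswap _ _ (hinv _ _ (hswap _ _ h))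
  rcases p with ⟨i, s⟩
  rcases q with ⟨j, t⟩
  fin_cases i <;> fin_cases j <;> simp only [ne_eq, not_true_eq_false] at hpq <;>
    cases s <;> cases t <;> simp only [letterVal] <;> simp <;> solve_by_elim

theorem closure_letterVal_pair (x y : G) {p q : Fin 2 × Bool} (hpq : p.1 ≠ q.1) :
    Subgroup.closure {letterVal ![x, y] p, letterVal ![x, y] q} = Subgroup.closure {x, y} :=
  letterVal_pair_of_swap_of_inv_left
    (P := fun u v => Subgroup.closure {u, v} = Subgroup.closure {x, y})
    (fun u v h => by rw [Set.pair_comm, h]) (fun u v h => by rw [Subgroup.closure_pair_inv_left, h])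
    rfl hpq

theorem isConjUpToInv_commutatorElement_letterVal (x y : G) {p q : Fin 2 × Bool}
    (hpq : p.1 ≠ q.1) : IsConjUpToInv ⁅letterVal ![x, y] p, letterVal ![x, y] q⁆ ⁅x, y⁆ :=
  letterVal_pair_of_swap_of_inv_left (P := fun u v => IsConjUpToInv ⁅u, v⁆ ⁅x, y⁆)
    (fun u v h => (isConjUpToInv_commutatorElement_swap u v).trans h)
    (fun u v h => (isConjUpToInv_commutatorElement_inv_left u v).trans h) (.of_isConj (.refl _)) hpq

theorem range_lift_pair (x y : G) : (lift ![x, y]).range = Subgroup.closure {x, y} := by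
  rw [range_lift_eq_closure, Matrix.range_cons, Matrix.range_cons, Matrix.range_empty,
    Set.union_empty, Set.singleton_union]

theorem closure_conj_letterVal_mul_eq_top {x y : G} (h : Subgroup.closure {x, y} = ⊤)
    {p q : Fin 2 × Bool} (hpq : p.1 ≠ q.1) (g : G) :
    Subgroup.closure {g * letterVal ![x, y] p * g⁻¹,
      g * (letterVal ![x, y] p * letterVal ![x, y] q) * g⁻¹} = ⊤ := by
  rw [Subgroup.closure_pair_conj, Subgroup.closure_pair_mul_right, closure_letterVal_pair x y hpq,
    h, Subgroup.map_top_of_surjective _ (MulAut.conj g).surjective]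

theorem isConjUpToInv_commutatorElement_conj_letterVal_mul (x y : G) {p q : Fin 2 × Bool}
    (hpq : p.1 ≠ q.1) (g : G) :
    IsConjUpToInv ⁅g * letterVal ![x, y] p * g⁻¹,
      g * (letterVal ![x, y] p * letterVal ![x, y] q) * g⁻¹⁆ ⁅x, y⁆ :=
  (IsConjUpToInv.of_isConj ((isConj_commutatorElement_conj _ _ _).trans
    (isConj_commutatorElement_mul_right _ _))).trans
    (isConjUpToInv_commutatorElement_letterVal x y hpq)

theorem norm_letterVal_add_norm_letterVal (x y : FreeGroup β) {p q : Fin 2 × Bool}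
    (hpq : p.1 ≠ q.1) :
    (letterVal ![x, y] p).norm + (letterVal ![x, y] q).norm = x.norm + y.norm := by
  rcases p with ⟨i, _⟩
  rcases q with ⟨j, _⟩
  fin_cases i <;> fin_cases j <;> simp_all [add_comm]

theorem isNielsenReduced_of_forall_norm_le {f : Fin 2 → FreeGroup β} (hf : ∀ i, f i ≠ 1)
    (h : ∀ p q : Fin 2 × Bool, p.1 ≠ q.1 → ∀ g, (letterVal f p).norm + (letterVal f q).norm ≤
      (g * letterVal f p * g⁻¹).norm + (g * (letterVal f p * letterVal f q) * g⁻¹).norm) :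
    IsNielsenReduced f := by
  have hright : ∀ p q : Fin 2 × Bool, p.1 ≠ q.1 →
      (letterVal f q).norm ≤ (letterVal f p * letterVal f q).norm :=
    fun p q hpq => by simpa using h p q hpq 1
  intro p q r hpqr
  have hpq : IsReduced [p, q] := hpqr.infix ⟨[], [r], rfl⟩
  have hqr : IsReduced [q, r] := hpqr.infix ⟨[p], [], rfl⟩
  have h₁ := (norm_le_norm_letterVal_mul hf hright hpq).1
  have h₂ := (norm_le_norm_letterVal_mul hf hright hqr).2
  set v := letterVal f
  have hne : ∀ p, v p ≠ 1 := letterVal_ne_one hf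
  have hsq : ∀ p, (v p).norm < (v p * v p).norm := fun p => norm_lt_norm_mul_self (hne p)
  by_contra! hge
  -- Half of `q` cancels on each side, so `p` and `r` are letters of the other generator:
  -- `r = p` is excluded by the conjugation move on `(q, q p)`, and `r = p⁻¹` forces `q = 1`.
  have e₁ : (v p * v q).norm = (v p).norm := by omega
  have e₂ : (v q * v r).norm = (v r).norm := by omega
  have hpq' : p.1 ≠ q.1 := by
    intro h1
    obtain rfl : p = q := Prod.ext h1 ((isReduced_cons_cons.1 hpq).1 h1)
    exact (hsq p).ne' e₁
  have hqr' : q.1 ≠ r.1 := by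
    intro h1
    obtain rfl : q = r := Prod.ext h1 ((isReduced_cons_cons.1 hqr).1 h1)
    exact (hsq q).ne' e₂
  obtain hr | hr : v r = v p ∨ v r = (v p)⁻¹ :=
    letterVal_eq_or_eq_inv_of_fst_eq f (show p.1 = r.1 by omega)
  all_goals rw [hr] at e₂
  · obtain ⟨g, hg⟩ := exists_norm_conj_add_norm_conj_mul_lt (hne q) (e₁ ▸ hright p q hpq') e₂ e₁
    have := h q p hpq'.symm g
    omega
  · refine hne q (eq_one_of_norm_mul_eq_of_norm_inv_mul_eq e₂ ?_)
    rw [← mul_inv_rev, norm_inv_eq, e₁, norm_inv_eq]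

theorem closure_of_zero_of_one :
    Subgroup.closure {of 0, of 1} = (⊤ : Subgroup (FreeGroup (Fin 2))) := by
  rw [← closure_range_of]
  congr 1
  ext z
  simp [Fin.exists_fin_two, eq_comm]

theorem ne_one_of_closure_pair_eq_top {x y : FreeGroup (Fin 2)}
    (h : Subgroup.closure {x, y} = ⊤) : x ≠ 1 := by
  rintro rfl
  rw [Subgroup.closure_insert_one, ← Subgroup.zpowers_eq_closure] at h
  obtain ⟨k, hk⟩ := Subgroup.mem_zpowers_iff.1 (h ▸ Subgroup.mem_top (of 0))
  obtain ⟨l, hl⟩ := Subgroup.mem_zpowers_iff.1 (h ▸ Subgroup.mem_top (of 1))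
  have : (of 0 : FreeGroup (Fin 2)) * of 1 = of 1 * of 0 := by rw [← hk, ← hl, zpow_mul_comm]
  exact absurd this (by decide)

theorem IsNielsenReduced.isConjUpToInv_commutatorElement {x y : FreeGroup (Fin 2)}
    (hNR : IsNielsenReduced ![x, y]) (h : Subgroup.closure {x, y} = ⊤) :
    IsConjUpToInv ⁅x, y⁆ ⁅(of 0 : FreeGroup (Fin 2)), of 1⁆ := by
  have hrange : ∀ z, z ∈ (lift ![x, y]).range := by simp [range_lift_pair, h]
  obtain ⟨p, hp⟩ := hNR.exists_letterVal_eq (hrange (of 0)) (norm_of 0)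
  obtain ⟨q, hq⟩ := hNR.exists_letterVal_eq (hrange (of 1)) (norm_of 1)
  have hpq : p.1 ≠ q.1 := by
    intro h
    rcases letterVal_eq_or_eq_inv_of_fst_eq ![x, y] h with h' | h' <;> rw [hp, hq] at h' <;>
      exact absurd h' (by decide)
  rw [← hp, ← hq]
  exact (isConjUpToInv_commutatorElement_letterVal x y hpq).symm

theorem isConjUpToInv_commutatorElement_of_closure_eq_top (x y : FreeGroup (Fin 2))
    (h : Subgroup.closure {x, y} = ⊤) :
    IsConjUpToInv ⁅x, y⁆ ⁅(of 0 : FreeGroup (Fin 2)), of 1⁆ := by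
  by_cases hmove : ∃ p q : Fin 2 × Bool, p.1 ≠ q.1 ∧ ∃ g,
      (g * letterVal ![x, y] p * g⁻¹).norm +
        (g * (letterVal ![x, y] p * letterVal ![x, y] q) * g⁻¹).norm < x.norm + y.norm
  · obtain ⟨p, q, hpq, g, hlt⟩ := hmove
    exact (isConjUpToInv_commutatorElement_conj_letterVal_mul x y hpq g).symm.trans
      (isConjUpToInv_commutatorElement_of_closure_eq_top _ _
        (closure_conj_letterVal_mul_eq_top h hpq g))
  push Not at hmove
  have hx := ne_one_of_closure_pair_eq_top h
  have hy := ne_one_of_closure_pair_eq_top ((Set.pair_comm y x).symm ▸ h)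
  refine IsNielsenReduced.isConjUpToInv_commutatorElement ?_ h
  refine isNielsenReduced_of_forall_norm_le (by simp [Fin.forall_fin_two, hx, hy]) ?_
  intro p q hpq g
  rw [norm_letterVal_add_norm_letterVal x y hpq]
  exact hmove p q hpq g
termination_by x.norm + y.norm

end TwoGenerators

end FreeGroup

theorem trSL_conj (c g : Matrix.SpecialLinearGroup (Fin 2) ℝ) : trSL (c * g * c⁻¹) = trSL g := by
  simp only [trSL, Matrix.SpecialLinearGroup.coe_mul]
  rw [Matrix.trace_mul_cycle, ← Matrix.SpecialLinearGroup.coe_mul, inv_mul_cancel,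
    Matrix.SpecialLinearGroup.coe_one, one_mul]

theorem trSL_inv (g : Matrix.SpecialLinearGroup (Fin 2) ℝ) : trSL g⁻¹ = trSL g := by
  simp [trSL, Matrix.SpecialLinearGroup.coe_inv, Matrix.adjugate_fin_two, Matrix.trace_fin_two,
    add_comm]

theorem trSL_eq_of_isConjUpToInv {g h : Matrix.SpecialLinearGroup (Fin 2) ℝ}
    (hc : IsConjUpToInv g h) : trSL g = trSL h := by
  have key : ∀ {h}, IsConj g h → trSL g = trSL h := fun hc => by
    obtain ⟨c, rfl⟩ := isConj_iff.1 hc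
    exact (trSL_conj c g).symm
  rcases hc with hc | hc
  · exact key hc
  · rw [key hc, trSL_inv]

/-- For any homomorphism `ρ : F₂ → SL(2,ℝ)` and any automorphism `φ` of
`F₂ = ⟨a,b⟩`, the trace of the commutator of the images of the generators is
unchanged: `Tr[ρ(φ a), ρ(φ b)] = Tr[ρ a, ρ b]`. -/
theorem stmt14 (ρ : FreeGroup (Fin 2) →* Matrix.SpecialLinearGroup (Fin 2) ℝ)
    (φ : MulAut (FreeGroup (Fin 2))) :
    trSL (ρ (φ (FreeGroup.of 0)) * ρ (φ (FreeGroup.of 1)) *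
        (ρ (φ (FreeGroup.of 0)))⁻¹ * (ρ (φ (FreeGroup.of 1)))⁻¹) =
      trSL (ρ (FreeGroup.of 0) * ρ (FreeGroup.of 1) *
        (ρ (FreeGroup.of 0))⁻¹ * (ρ (FreeGroup.of 1))⁻¹) := by
  have hgen : Subgroup.closure {φ (FreeGroup.of 0), φ (FreeGroup.of 1)} = ⊤ := by
    rw [← Set.image_pair, ← MonoidHom.coe_coe, ← MonoidHom.map_closure,
      FreeGroup.closure_of_zero_of_one, Subgroup.map_top_of_surjective _ φ.surjective]
  have hc := (FreeGroup.isConjUpToInv_commutatorElement_of_closure_eq_top _ _ hgen).map ρ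
  rw [map_commutatorElement, map_commutatorElement] at hc
  exact trSL_eq_of_isConjUpToInv hc
end
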